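/- Let H be a complex Hilbert space, let t₀ < t₁ < ⋯ < t_m be real numbers and h₀, …, h_{m−1} ∈ H, and let u : ℝ → H be the step function u = Σ_{i=0}^{m−1} h_i 1_{[t_i, t_{i+1})}. Then the 2-variation norm of u satisfies ‖u‖_{V²} ≤ 2 (Σ_{i=0}^{m−1} ‖h_i‖²)^{1/2}; in particular every U²-atom belongs to V² with norm at most 2. -/
import Mathlib

open MeasureTheory ENNReal Set

noncomputable section

def V2line {H : Type*} [NormedAddCommGroup H] (u : ℝ → H) : ℝ≥0∞ :=
  ⨆ (m : ℕ) (s : Fin (m + 1) → ℝ) (_ : StrictMono s),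
    ENNReal.ofReal (Real.sqrt (∑ i : Fin m, ‖u (s i.succ) - u (s i.castSucc)‖ ^ 2))

/-- Combinatorial core: sum of squared increments of `g ∘ κ` for monotone `κ`. -/
lemma sum_sq_diff_le {H : Type*} [NormedAddCommGroup H] (g : ℕ → H) (N M : ℕ)
    (κ : Fin (M + 1) → ℕ) (hmono : Monotone κ) (hbd : ∀ j, κ j < N) :
    ∑ j : Fin M, ‖g (κ j.succ) - g (κ j.castSucc)‖ ^ 2 ≤
      4 * ∑ n ∈ Finset.range N, ‖g n‖ ^ 2 := by
  classical
  set S : Finset (Fin M) := Finset.univ.filter (fun j => κ j.castSucc ≠ κ j.succ) with hS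
  have hsum : ∑ j : Fin M, ‖g (κ j.succ) - g (κ j.castSucc)‖ ^ 2 =
      ∑ j ∈ S, ‖g (κ j.succ) - g (κ j.castSucc)‖ ^ 2 := by
    refine (Finset.sum_subset (Finset.filter_subset _ _) ?_).symm
    intro j _ hj
    simp only [hS, Finset.mem_filter, Finset.mem_univ, true_and, not_not] at hj
    rw [hj]; simp
  have hlt : ∀ j ∈ S, κ j.castSucc < κ j.succ := by
    intro j hj
    simp only [hS, Finset.mem_filter, Finset.mem_univ, true_and] at hj
    exact lt_of_le_of_ne (hmono (by simp [Fin.le_def])) hj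
  have hstep : ∀ j ∈ S, ‖g (κ j.succ) - g (κ j.castSucc)‖ ^ 2 ≤
      2 * ‖g (κ j.castSucc)‖ ^ 2 + 2 * ‖g (κ j.succ)‖ ^ 2 := by
    intro j _
    have h1 := norm_sub_le (g (κ j.succ)) (g (κ j.castSucc))
    have h2 := norm_nonneg (g (κ j.succ) - g (κ j.castSucc))
    nlinarith [sq_nonneg (‖g (κ j.succ)‖ - ‖g (κ j.castSucc)‖), norm_nonneg (g (κ j.succ)), norm_nonneg (g (κ j.castSucc))]
  have hI1 : Set.InjOn (fun j : Fin M => κ j.castSucc) S := by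
    intro a ha b hb hab
    have hab' : κ a.castSucc = κ b.castSucc := hab
    by_contra hne
    rcases lt_or_gt_of_ne hne with hlt' | hlt'
    · have h1 := hlt a ha
      have h2 : κ a.succ ≤ κ b.castSucc := hmono (by simp [Fin.le_def]; omega)
      omega
    · have h1 := hlt b hb
      have h2 : κ b.succ ≤ κ a.castSucc := hmono (by simp [Fin.le_def]; omega)
      omega
  have hI2 : Set.InjOn (fun j : Fin M => κ j.succ) S := by
    intro a ha b hb hab
    have hab' : κ a.succ = κ b.succ := hab
    by_contra hne
    rcases lt_or_gt_of_ne hne with hlt' | hlt'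
    · have h1 := hlt b hb
      have h2 : κ a.succ ≤ κ b.castSucc := hmono (by simp [Fin.le_def]; omega)
      omega
    · have h1 := hlt a ha
      have h2 : κ b.succ ≤ κ a.castSucc := hmono (by simp [Fin.le_def]; omega)
      omega
  have key : ∀ (f : Fin M → ℕ), Set.InjOn f S → (∀ j, f j < N) →
      ∑ j ∈ S, ‖g (f j)‖ ^ 2 ≤ ∑ n ∈ Finset.range N, ‖g n‖ ^ 2 := by
    intro f hinj hfb
    have heq : ∑ n ∈ S.image f, ‖g n‖ ^ 2 = ∑ j ∈ S, ‖g (f j)‖ ^ 2 :=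
      Finset.sum_image (fun a ha b hb hab =>
        hinj (Finset.mem_coe.mpr ha) (Finset.mem_coe.mpr hb) hab)
    rw [← heq]
    refine Finset.sum_le_sum_of_subset_of_nonneg ?_ (fun _ _ _ => by positivity)
    intro n hn
    simp only [Finset.mem_image] at hn
    obtain ⟨j, _, rfl⟩ := hn
    exact Finset.mem_range.mpr (hfb j)
  calc ∑ j : Fin M, ‖g (κ j.succ) - g (κ j.castSucc)‖ ^ 2
      = ∑ j ∈ S, ‖g (κ j.succ) - g (κ j.castSucc)‖ ^ 2 := hsum
    _ ≤ ∑ j ∈ S, (2 * ‖g (κ j.castSucc)‖ ^ 2 + 2 * ‖g (κ j.succ)‖ ^ 2) :=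
        Finset.sum_le_sum hstep
    _ = 2 * ∑ j ∈ S, ‖g (κ j.castSucc)‖ ^ 2 + 2 * ∑ j ∈ S, ‖g (κ j.succ)‖ ^ 2 := by
        rw [Finset.sum_add_distrib, Finset.mul_sum, Finset.mul_sum]
    _ ≤ 2 * ∑ n ∈ Finset.range N, ‖g n‖ ^ 2 + 2 * ∑ n ∈ Finset.range N, ‖g n‖ ^ 2 := by
        gcongr
        · exact key _ hI1 (fun j => hbd _)
        · exact key _ hI2 (fun j => hbd _)
    _ = 4 * ∑ n ∈ Finset.range N, ‖g n‖ ^ 2 := by ring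

/-- a step function `u = Σ_{i<m} h_i 1_{[t_i, t_{i+1})}` with values in a
complex Hilbert space `H` has 2-variation norm at most `2 (Σ ‖h_i‖²)^{1/2}`; in
particular every `U²`-atom belongs to `V²` with norm at most `2`. -/
theorem step_function_V2_bound {H : Type*} [NormedAddCommGroup H]
    [InnerProductSpace ℂ H] [CompleteSpace H]
    (m : ℕ) (t : Fin (m + 1) → ℝ) (ht : StrictMono t) (h : Fin m → H) :
    V2line (fun s => ∑ i : Fin m,
        Set.indicator (Set.Ico (t i.castSucc) (t i.succ)) (fun _ => h i) s) ≤
      ENNReal.ofReal (2 * Real.sqrt (∑ i : Fin m, ‖h i‖ ^ 2)) := by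
  classical
  set g : ℕ → H := fun n => ∑ i : Fin m, if n = (i : ℕ) + 1 then h i else 0 with hg
  set k : ℝ → ℕ := fun x => (Finset.univ.filter (fun i : Fin (m + 1) => t i ≤ x)).card with hk
  -- characterization : t i ≤ x ↔ i < k x
  have hchar : ∀ (x : ℝ) (i : Fin (m + 1)), t i ≤ x ↔ (i : ℕ) < k x := by
    intro x i
    have hkx : k x = (Finset.univ.filter (fun j : Fin (m + 1) => t j ≤ x)).card := rfl
    rw [hkx]
    constructor
    · intro hle
      have hsub : ∀ n ∈ Finset.range ((i : ℕ) + 1),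
          (⟨min n m, by omega⟩ : Fin (m + 1)) ∈
            Finset.univ.filter (fun j : Fin (m + 1) => t j ≤ x) := by
        intro n hn
        simp only [Finset.mem_range] at hn
        simp only [Finset.mem_filter, Finset.mem_univ, true_and]
        have : (⟨min n m, by omega⟩ : Fin (m + 1)) ≤ i := by
          simp [Fin.le_def]; omega
        exact le_trans (ht.monotone this) hle
      have hinj : Set.InjOn (fun n : ℕ => (⟨min n m, by omega⟩ : Fin (m + 1)))
          (Finset.range ((i : ℕ) + 1)) := by
        intro a ha b hb hab
        simp only [Finset.coe_range, Set.mem_Iio] at ha hb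
        have hi := i.isLt
        simp only [Fin.mk.injEq] at hab
        omega
      have := Finset.card_le_card_of_injOn _ hsub hinj
      simp only [Finset.card_range] at this
      omega
    · intro hlt
      by_contra hle
      push_neg at hle
      have hsub : (Finset.univ.filter (fun j : Fin (m + 1) => t j ≤ x)) ⊆
          Finset.univ.filter (fun j : Fin (m + 1) => (j : ℕ) < (i : ℕ)) := by
        intro j hj
        simp only [Finset.mem_filter, Finset.mem_univ, true_and] at hj ⊢
        by_contra hji
        push_neg at hji
        exact absurd (le_trans (ht.monotone (by rw [Fin.le_def]; omega : i ≤ j)) hj)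
          (not_le.mpr hle)
      have hcard := Finset.card_le_card hsub
      have : (Finset.univ.filter (fun j : Fin (m + 1) => (j : ℕ) < (i : ℕ))).card ≤ (i : ℕ) := by
        have hinj : Set.InjOn (fun j : Fin (m + 1) => (j : ℕ))
            (Finset.univ.filter (fun j : Fin (m + 1) => (j : ℕ) < (i : ℕ))) :=
          fun a _ b _ hab => Fin.ext hab
        have hmaps : ∀ j ∈ Finset.univ.filter (fun j : Fin (m + 1) => (j : ℕ) < (i : ℕ)),
            (j : ℕ) ∈ Finset.range (i : ℕ) := by
          intro j hj
          simp only [Finset.mem_filter, Finset.mem_univ, true_and] at hj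
          exact Finset.mem_range.mpr hj
        have := Finset.card_le_card_of_injOn _ hmaps hinj
        simpa using this
      omega
  -- the step function equals g ∘ k
  have hstep : ∀ x : ℝ, (∑ i : Fin m,
      Set.indicator (Set.Ico (t i.castSucc) (t i.succ)) (fun _ => h i) x) = g (k x) := by
    intro x
    rw [hg]
    refine Finset.sum_congr rfl ?_
    intro i _
    have h1 : t i.castSucc ≤ x ↔ (i : ℕ) < k x := by
      simpa using hchar x i.castSucc
    have h2 : t i.succ ≤ x ↔ (i : ℕ) + 1 < k x := by
      simpa using hchar x i.succ
    by_cases hkx : k x = (i : ℕ) + 1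
    · have hmem : x ∈ Set.Ico (t i.castSucc) (t i.succ) := by
        constructor
        · exact h1.mpr (by omega)
        · by_contra hcon
          push_neg at hcon
          have := h2.mp hcon
          omega
      rw [Set.indicator_of_mem hmem, if_pos hkx]
    · have hmem : x ∉ Set.Ico (t i.castSucc) (t i.succ) := by
        intro hmem
        have ha := h1.mp hmem.1
        have hb : ¬ ((i : ℕ) + 1 < k x) := fun hc => absurd (h2.mpr hc) (not_le.mpr hmem.2)
        omega
      rw [Set.indicator_of_notMem hmem, if_neg hkx]
  -- total sum of g
  have hT : ∑ n ∈ Finset.range (m + 2), ‖g n‖ ^ 2 = ∑ i : Fin m, ‖h i‖ ^ 2 := by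
    have hg0 : g 0 = 0 := by simp [hg]
    have hgm : g (m + 1) = 0 := by
      rw [hg]
      refine Finset.sum_eq_zero fun i _ => ?_
      rw [if_neg (by omega)]
    have hgn : ∀ (n : ℕ) (hn : n < m), g (n + 1) = h ⟨n, hn⟩ := by
      intro n hn
      have hrfl : g (n + 1) = ∑ i : Fin m, if n + 1 = (i : ℕ) + 1 then h i else 0 := rfl
      rw [hrfl, Finset.sum_eq_single (⟨n, hn⟩ : Fin m)]
      · simp
      · intro i _ hi
        rw [if_neg]
        intro hc
        exact hi (by apply Fin.ext; simp; omega)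
      · simp
    rw [Finset.sum_range_succ' _ (m + 1), hg0, Finset.sum_range_succ, hgm]
    simp only [norm_zero, ne_eq, OfNat.ofNat_ne_zero, not_false_eq_true, zero_pow, add_zero]
    rw [← Fin.sum_univ_eq_sum_range (fun n => ‖g (n + 1)‖ ^ 2) m]
    refine Finset.sum_congr rfl fun i _ => ?_
    rw [hgn i i.isLt]
  have hkmono : Monotone k := by
    intro a b hab
    apply Finset.card_le_card
    intro i hi
    simp only [Finset.mem_filter, Finset.mem_univ, true_and] at hi ⊢
    exact le_trans hi hab
  have hkbd : ∀ x, k x < m + 2 := fun x =>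
    lt_of_le_of_lt (Finset.card_filter_le _ _) (by simp)
  refine iSup_le fun M => iSup_le fun s => iSup_le fun hs => ?_
  refine ENNReal.ofReal_le_ofReal ?_
  have h4 : ∑ j : Fin M, ‖(∑ i : Fin m,
      Set.indicator (Set.Ico (t i.castSucc) (t i.succ)) (fun _ => h i) (s j.succ)) -
      (∑ i : Fin m,
      Set.indicator (Set.Ico (t i.castSucc) (t i.succ)) (fun _ => h i) (s j.castSucc))‖ ^ 2 ≤
      4 * ∑ i : Fin m, ‖h i‖ ^ 2 := by
    simp only [hstep]
    rw [← hT]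
    exact sum_sq_diff_le g (m + 2) M (fun j => k (s j))
      (fun a b hab => hkmono (hs.monotone hab)) (fun j => hkbd _)
  calc Real.sqrt (∑ j : Fin M, ‖(∑ i : Fin m,
        Set.indicator (Set.Ico (t i.castSucc) (t i.succ)) (fun _ => h i) (s j.succ)) -
        (∑ i : Fin m,
        Set.indicator (Set.Ico (t i.castSucc) (t i.succ)) (fun _ => h i) (s j.castSucc))‖ ^ 2)
      ≤ Real.sqrt (4 * ∑ i : Fin m, ‖h i‖ ^ 2) := Real.sqrt_le_sqrt h4
    _ = 2 * Real.sqrt (∑ i : Fin m, ‖h i‖ ^ 2) := by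
        rw [show (4 : ℝ) = 2 ^ 2 by norm_num, Real.sqrt_mul (by positivity),
          Real.sqrt_sq (by norm_num)]

end
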